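/- arXiv:2206.14629 — 5 statements merged into one kernel-verified Lean document; each statement's English description precedes it below -/
import Mathlib

section
/- Let (φ₁,…,φₙ) : A_• → B_• be a morphism of n-angles, together with chosen trapez diagrams for A_• (supporting objects A_{i+1.5} and data α_i', α_i'', αₙ^{i+1}) and for B_• (supporting objects B_{i+1.5} and data β_i', β_i'', βₙ^{i+1}). Suppose that for each i ∈ {0,1,…,n−3} a map φ_{i+2.5} : A_{i+2.5} → B_{i+2.5} is chosen (with conventions φ_{1.5} := φ₁, A_{1.5} := A₁, B_{1.5} := B₁, α₁'' := α₁, β₁'' := β₁, and with A_{n−0.5} := Aₙ, B_{n−0.5} := Bₙ) satisfying φ_{i+2.5}∘α_{i+2}' = β_{i+2}'∘φ_{i+2} and βₙ^{i+2}∘φ_{i+2.5} = (Σφ_{i+1.5})∘αₙ^{i+2}. Then the remaining squares of the trapez prism automatically commute: φ_{i+2}∘α_{i+1}'' = β_{i+1}''∘φ_{i+1.5} for all i ∈ {1,…,n−3}, so that the entire trapez prism diagram commutes. -/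
open CategoryTheory CategoryTheory.Limits CategoryTheory.Pretriangulated

universe v u

/-- Iterated suspension `Σ^k` on objects, where `Σ = shiftFunctor T (1 : ℤ)`. -/
def shiftIter (T : Type u) [Category.{v} T] [HasShift T ℤ] : ℕ → T → T
  | 0, X => X
  | k + 1, X => (shiftFunctor T (1 : ℤ)).obj (shiftIter T k X)

/-- Iterated suspension `Σ^k` on morphisms. -/
def shiftIterMap (T : Type u) [Category.{v} T] [HasShift T ℤ] :
    ∀ (k : ℕ) {X Y : T}, (X ⟶ Y) → (shiftIter T k X ⟶ shiftIter T k Y)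
  | 0, _, _, f => f
  | k + 1, _, _, f => (shiftFunctor T (1 : ℤ)).map (shiftIterMap T k f)

/-- An `n`-`Σ`-sequence `A₁ → A₂ → ⋯ → Aₙ → Σ^{n-2} A₁` (with suspension `Σ^{n-2}`,
where `Σ` is the shift by `1` of the ambient triangulated category).
Only the data indexed by `1 ≤ i ≤ n` is relevant. -/
structure NSeq (T : Type u) [Category.{v} T] [HasShift T ℤ] (n : ℕ) where
  obj : ℕ → T
  map : ∀ i : ℕ, obj i ⟶ obj (i + 1)
  last : obj n ⟶ shiftIter T (n - 2) (obj 1)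

variable (T : Type u) [Category.{v} T] [HasZeroObject T] [Preadditive T] [HasShift T ℤ]
  [∀ k : ℤ, (shiftFunctor T k).Additive] [Pretriangulated T]

/-- A trapez diagram for an `n`-`Σ`-sequence `A`, with supporting objects `supp i = A_{i+0.5}`
(`1 ≤ i ≤ n-1`, with the conventions `supp 1 = A₁`, `supp (n-1) = Aₙ`), maps
`fst i = αᵢ' : Aᵢ ⟶ A_{i+0.5}`, `snd i = αᵢ'' : A_{i+0.5} ⟶ A_{i+1}`,
`conn i = αₙ^{i+1} : A_{i+1.5} ⟶ Σ A_{i+0.5}`, distinguished triangles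
`A_{i+0.5} → A_{i+1} → A_{i+1.5} → Σ A_{i+0.5}` for `1 ≤ i ≤ n-2`, factorizations
`αᵢ = αᵢ'' ∘ αᵢ'` for `2 ≤ i ≤ n-2`, and
`αₙ = (Σ^{n-3} αₙ²) ∘ ⋯ ∘ (Σ αₙ^{n-2}) ∘ αₙ^{n-1}` (encoded by the composites `comp`). -/
structure Trapez {n : ℕ} (A : NSeq T n) where
  supp : ℕ → T
  supp_one : supp 1 = A.obj 1
  supp_last : supp (n - 1) = A.obj n
  fst : ∀ i : ℕ, A.obj i ⟶ supp i
  snd : ∀ i : ℕ, supp i ⟶ A.obj (i + 1)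
  conn : ∀ i : ℕ, supp (i + 1) ⟶ (shiftFunctor T (1 : ℤ)).obj (supp i)
  snd_one : snd 1 = eqToHom supp_one ≫ A.map 1
  fst_last : ∀ h : n - 1 + 1 = n, fst (n - 1) = A.map (n - 1) ≫ eqToHom (congrArg A.obj h) ≫ eqToHom supp_last.symm
  fac : ∀ i : ℕ, 2 ≤ i → i ≤ n - 2 → A.map i = fst i ≫ snd i
  tri : ∀ i : ℕ, 1 ≤ i → i ≤ n - 2 →
    Triangle.mk (snd i) (fst (i + 1)) (conn i) ∈ distTriang T
  comp : ∀ k : ℕ, supp (k + 1) ⟶ shiftIter T k (supp 1)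
  comp_zero : comp 0 = 𝟙 (supp 1)
  comp_succ : ∀ k : ℕ, comp (k + 1) = conn (k + 1) ≫ (shiftFunctor T (1 : ℤ)).map (comp k)
  last_eq : ∀ h : n - 2 + 1 = n - 1,
    A.last = eqToHom supp_last.symm ≫ eqToHom (congrArg supp h.symm) ≫ comp (n - 2) ≫
      eqToHom (congrArg (shiftIter T (n - 2)) supp_one)

/-- The predicate that an `n`-`Σ`-sequence is an `n`-angle of the `(n-2)`-cluster tilting
`n`-angulated category with objects `C`: all its objects lie in `C` and it admits a
trapez diagram. -/
def IsNAngle (C : Set T) {n : ℕ} (A : NSeq T n) : Prop :=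
  (∀ i : ℕ, 1 ≤ i → i ≤ n → A.obj i ∈ C) ∧ Nonempty (Trapez T A)

/-- `φ` is a morphism of `n`-`Σ`-sequences `A ⟶ B`. -/
def IsNSeqHom {n : ℕ} (A B : NSeq T n) (φ : ∀ i : ℕ, A.obj i ⟶ B.obj i) : Prop :=
  (∀ i : ℕ, 1 ≤ i → i ≤ n - 1 → A.map i ≫ φ (i + 1) = φ i ≫ B.map i) ∧
  A.last ≫ shiftIterMap T (n - 2) (φ 1) = φ n ≫ B.last

/- **Cluster-tilting context.** `C` is the class of objects of a full additive subcategory,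
closed under direct summands (retracts), stable under `Σ^{n-2}`, functorially finite
(left and right `C`-approximations exist), and `(n-2)`-cluster tilting. -/

variable [IsTriangulated T] [HasBinaryBiproducts T]

/-!
The difference `φ_{i+2} ∘ α''_{i+1} - β''_{i+1} ∘ φ_{i+1.5}` vanishes on `α'_{i+1}`, by the
factorizations `α_{i+1} = α''_{i+1} ∘ α'_{i+1}`, `β_{i+1} = β''_{i+1} ∘ β'_{i+1}` and the commuting
squares `φ_{i+1.5} ∘ α'_{i+1} = β'_{i+1} ∘ φ_{i+1}` and `φ_{i+2} ∘ α_{i+1} = β_{i+1} ∘ φ_{i+1}`.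
By the triangle `A_{i+0.5} → A_{i+1} → A_{i+1.5} → Σ A_{i+0.5}` it therefore factors through a
map `Σ A_{i+0.5} → B_{i+2}`, and every such map is zero: walking along the triangles of the
trapez, `Hom(Σ^j A_{k+1.5}, 𝒞) = 0` whenever `j ≥ 1` and `j + k ≤ n - 3`, starting from
`Hom(Σ^j 𝒞, 𝒞) ↪ Hom(Σ^{n-2} 𝒞, Σ^{n-2-j} 𝒞) = 0` for `1 ≤ j ≤ n - 3`.
-/

section ShiftIter

variable {D : Type*} [Category D] [HasShift D ℤ]

lemma shiftIter_shift_comm (j : ℕ) (X : D) :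
    shiftIter D j ((shiftFunctor D (1 : ℤ)).obj X) =
      (shiftFunctor D (1 : ℤ)).obj (shiftIter D j X) := by
  induction j with
  | zero => rfl
  | succ j ih => exact congrArg (shiftFunctor D (1 : ℤ)).obj ih

lemma shiftIter_add (m j : ℕ) (X : D) :
    shiftIter D m (shiftIter D j X) = shiftIter D (m + j) X := by
  induction m with
  | zero => rw [Nat.zero_add]; rfl
  | succ m ih => rw [Nat.succ_add]; exact congrArg (shiftFunctor D (1 : ℤ)).obj ih

lemma shiftIterMap_eq_zero_iff [HasZeroMorphisms D] (j : ℕ) {X Y : D} (f : X ⟶ Y) :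
    shiftIterMap D j f = 0 ↔ f = 0 := by
  induction j with
  | zero => rfl
  | succ j ih => exact (Functor.map_eq_zero_iff _).trans ih

lemma shiftIter_hom_eq_zero_of_mem [HasZeroMorphisms D] {C : Set D} {d : ℕ}
    (hshift : ∀ X ∈ C, shiftIter D d X ∈ C)
    (hC : ∀ X ∈ C, ∀ Y ∈ C, ∀ i : ℕ, 1 ≤ i → i < d → ∀ f : X ⟶ shiftIter D i Y, f = 0)
    {j : ℕ} (hj : 1 ≤ j) (hjd : j < d) {X Y : D} (hX : X ∈ C) (hY : Y ∈ C)
    (f : shiftIter D j X ⟶ Y) : f = 0 := by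
  have e : shiftIter D (d - j) (shiftIter D j X) = shiftIter D d X := by
    rw [shiftIter_add, Nat.sub_add_cancel hjd.le]
  rw [← shiftIterMap_eq_zero_iff (d - j), ← cancel_epi (eqToHom e.symm), comp_zero]
  exact hC _ (hshift X hX) Y hY (d - j) (by omega) (by omega) _

end ShiftIter

section Pretriangulated

variable {D : Type*} [Category D] [HasZeroObject D] [Preadditive D] [HasShift D ℤ]
  [∀ k : ℤ, (shiftFunctor D k).Additive] [Pretriangulated D]

lemma shiftIter_distinguished {X Y Z : D} {u : X ⟶ Y} {v : Y ⟶ Z}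
    {w : Z ⟶ (shiftFunctor D (1 : ℤ)).obj X} (hT : Triangle.mk u v w ∈ distTriang D) (j : ℕ) :
    Triangle.mk ((-1 : ℤ) ^ j • shiftIterMap D j u) ((-1 : ℤ) ^ j • shiftIterMap D j v)
      ((-1 : ℤ) ^ j • (shiftIterMap D j w ≫ eqToHom (shiftIter_shift_comm j X)))
      ∈ distTriang D := by
  induction j with
  | zero =>
    show Triangle.mk ((1 : ℤ) • u) ((1 : ℤ) • v) ((1 : ℤ) • (w ≫ 𝟙 _)) ∈ distTriang D
    simpa using hT
  | succ j ih =>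
    have hsign : (-1 : ℤ) ^ (j + 1) = -(-1) ^ j := by ring
    have e {P Q : D} (f : P ⟶ Q) : (-1 : ℤ) ^ (j + 1) • shiftIterMap D (j + 1) f =
        -(shiftFunctor D (1 : ℤ)).map ((-1 : ℤ) ^ j • shiftIterMap D j f) := by
      rw [Functor.map_zsmul, hsign, neg_smul]; rfl
    have e₃ : (-1 : ℤ) ^ (j + 1) •
          (shiftIterMap D (j + 1) w ≫ eqToHom (shiftIter_shift_comm (j + 1) X)) =
        -(shiftFunctor D (1 : ℤ)).map
          ((-1 : ℤ) ^ j • (shiftIterMap D j w ≫ eqToHom (shiftIter_shift_comm j X))) := by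
      rw [Functor.map_zsmul, Functor.map_comp, eqToHom_map, hsign, neg_smul]; rfl
    -- rotating three times shifts a triangle and negates all three of its maps
    rw [e u, e v, e₃]
    exact rot_of_distTriang _ (rot_of_distTriang _ (rot_of_distTriang _ ih))

lemma shiftIter_hom_eq_zero_of_distinguished {X Y Z : D} {u : X ⟶ Y} {v : Y ⟶ Z}
    {w : Z ⟶ (shiftFunctor D (1 : ℤ)).obj X} (hT : Triangle.mk u v w ∈ distTriang D) (j : ℕ)
    {W : D} (hY : ∀ f : shiftIter D j Y ⟶ W, f = 0)
    (hX : ∀ f : shiftIter D (j + 1) X ⟶ W, f = 0) (f : shiftIter D j Z ⟶ W) : f = 0 := by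
  obtain ⟨g, rfl⟩ := Triangle.yoneda_exact₃ _ (shiftIter_distinguished hT j) f
    (show ((-1 : ℤ) ^ j • shiftIterMap D j v) ≫ f = 0 by
      rw [Preadditive.zsmul_comp, hY (shiftIterMap D j v ≫ f), smul_zero])
  obtain rfl := hX g
  exact comp_zero

lemma hom_ext_of_distinguished {X Y Z : D} {u : X ⟶ Y} {v : Y ⟶ Z}
    {w : Z ⟶ (shiftFunctor D (1 : ℤ)).obj X} (hT : Triangle.mk u v w ∈ distTriang D) {W : D}
    (hX : ∀ f : (shiftFunctor D (1 : ℤ)).obj X ⟶ W, f = 0) {f g : Z ⟶ W}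
    (h : v ≫ f = v ≫ g) : f = g := by
  obtain ⟨k, hk⟩ := Triangle.yoneda_exact₃ _ hT (f - g)
    (show v ≫ (f - g) = 0 by rw [Preadditive.comp_sub, h, sub_self])
  obtain rfl := hX k
  exact sub_eq_zero.1 (hk.trans comp_zero)

lemma Trapez.shiftIter_supp_hom_eq_zero {n : ℕ} {A : NSeq D n} (tr : Trapez D A) {C : Set D}
    (hA : ∀ i : ℕ, 1 ≤ i → i ≤ n → A.obj i ∈ C)
    (hC : ∀ X ∈ C, ∀ Y ∈ C, ∀ j : ℕ, 1 ≤ j → j < n - 2 → ∀ f : shiftIter D j X ⟶ Y, f = 0)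
    (k : ℕ) {j : ℕ} (hj : 1 ≤ j) (hjk : j + k < n - 2) {Y : D} (hY : Y ∈ C)
    (f : shiftIter D j (tr.supp (k + 1)) ⟶ Y) : f = 0 := by
  induction k generalizing j with
  | zero => exact hC _ (tr.supp_one ▸ hA 1 le_rfl (by omega)) Y hY j hj (by omega) f
  | succ k ih =>
    exact shiftIter_hom_eq_zero_of_distinguished (tr.tri (k + 1) (by omega) (by omega)) j
      (hC _ (hA (k + 2) (by omega) (by omega)) Y hY j hj (by omega))
      (ih (Nat.le_add_left 1 j) (by omega)) f

end Pretriangulated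

theorem trapez_prism_commutes
    (n : ℕ) (C : Set T)
    (hC_shift : ∀ X : T, X ∈ C ↔ shiftIter T (n - 2) X ∈ C)
    (hCT_right : ∀ X : T, X ∈ C ↔
      ∀ Z : T, Z ∈ C → ∀ i : ℕ, 1 ≤ i → i ≤ n - 3 → ∀ f : X ⟶ shiftIter T i Z, f = 0)
    {A B : NSeq T n}
    (hAobj : ∀ i : ℕ, 1 ≤ i → i ≤ n → A.obj i ∈ C)
    (hBobj : ∀ i : ℕ, 1 ≤ i → i ≤ n → B.obj i ∈ C)
    (trA : Trapez T A) (trB : Trapez T B)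
    (φ : ∀ i : ℕ, A.obj i ⟶ B.obj i) (hφ : IsNSeqHom T A B φ)
    (ψ : ∀ i : ℕ, trA.supp i ⟶ trB.supp i)
    (hψ_fst : ∀ i : ℕ, i ≤ n - 3 → trA.fst (i + 2) ≫ ψ (i + 2) = φ (i + 2) ≫ trB.fst (i + 2)) :
    ∀ i : ℕ, 1 ≤ i → i ≤ n - 3 →
      trA.snd (i + 1) ≫ φ (i + 2) = ψ (i + 1) ≫ trB.snd (i + 1) := by
  have hC : ∀ X ∈ C, ∀ Y ∈ C, ∀ j : ℕ, 1 ≤ j → j < n - 2 → ∀ f : shiftIter T j X ⟶ Y, f = 0 :=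
    fun _ hX _ hY _ hj hjn => shiftIter_hom_eq_zero_of_mem (fun X hX => (hC_shift X).1 hX)
      (fun X hX Z hZ i hi hin => (hCT_right X).1 hX Z hZ i hi (by omega)) hj hjn hX hY
  intro i hi hin
  obtain ⟨m, rfl⟩ : ∃ m, i = m + 1 := ⟨i - 1, by omega⟩
  refine hom_ext_of_distinguished (trA.tri (m + 1) (by omega) (by omega))
    (trA.shiftIter_supp_hom_eq_zero hAobj hC m le_rfl (by omega)
      (hBobj (m + 3) (by omega) (by omega))) ?_
  calc trA.fst (m + 2) ≫ trA.snd (m + 2) ≫ φ (m + 3)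
      = A.map (m + 2) ≫ φ (m + 3) := by rw [trA.fac _ (by omega) (by omega), Category.assoc]
    _ = φ (m + 2) ≫ B.map (m + 2) := hφ.1 _ (by omega) (by omega)
    _ = φ (m + 2) ≫ trB.fst (m + 2) ≫ trB.snd (m + 2) := by
      rw [trB.fac _ (by omega) (by omega)]
    _ = trA.fst (m + 2) ≫ ψ (m + 2) ≫ trB.snd (m + 2) := by
      rw [← Category.assoc, ← hψ_fst m (by omega), Category.assoc]
end

section
/- Let A₁ →α₁→ A₂ →⋯→ Aₙ →αₙ→ Σ^{n−2}A₁ be an n-angle in 𝒞 equipped with a trapez diagram. Then for each i ∈ {1,…,n−3} the map α_{i+1}'' : A_{i+1.5} → A_{i+2} is a left 𝒞-approximation: for every object C ∈ 𝒞 and every map γ : A_{i+1.5} → C there exists a map γ̄ : A_{i+2} → C with γ̄∘α_{i+1}'' = γ. -/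
open CategoryTheory CategoryTheory.Limits CategoryTheory.Pretriangulated

universe v u

variable (T : Type u) [Category.{v} T] [HasZeroObject T] [Preadditive T] [HasShift T ℤ]
  [∀ k : ℤ, (shiftFunctor T k).Additive] [Pretriangulated T]

/- **Cluster-tilting context.** `C` is the class of objects of a full additive subcategory,
closed under direct summands (retracts), stable under `Σ^{n-2}`, functorially finite
(left and right `C`-approximations exist), and `(n-2)`-cluster tilting. -/

variable [IsTriangulated T] [HasBinaryBiproducts T]

/-! By the distinguished triangle `A_{i+1.5} → A_{i+2} → A_{i+2.5} → ΣA_{i+1.5}`, `γ` extends along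
`α_{i+1}''` as soon as `αₙ^{i+2} ≫ Σγ = 0`. In fact every map `δ : A_{k+0.5} ⟶ Σ^j Z` with
`1 ≤ j ≤ k - 2` vanishes, by descending induction on `k` starting from `A_{n-0.5} = Aₙ`:
by induction `αₙ^{k+1} ≫ Σδ = 0`, so `δ` factors through `A_{k+1}`, and `Hom(A_{k+1}, Σ^j Z) = 0`
by cluster tilting. -/

section

variable {D : Type*} [Category D] [HasZeroObject D] [Preadditive D] [HasShift D ℤ]
  [∀ k : ℤ, (shiftFunctor D k).Additive] [Pretriangulated D]

lemma CategoryTheory.Pretriangulated.yoneda_exact₁ {S : Triangle D} (hS : S ∈ distTriang D)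
    {X : D} (f : S.obj₁ ⟶ X) (hf : S.mor₃ ≫ f⟦(1 : ℤ)⟧' = 0) :
    ∃ g : S.obj₂ ⟶ X, f = S.mor₁ ≫ g := by
  obtain ⟨g, hg⟩ : ∃ g : S.obj₂⟦(1 : ℤ)⟧ ⟶ X⟦(1 : ℤ)⟧, f⟦(1 : ℤ)⟧' = (-S.mor₁⟦(1 : ℤ)⟧') ≫ g :=
    Triangle.yoneda_exact₃ _ (rot_of_distTriang _ hS) _ hf
  refine ⟨(shiftFunctor D (1 : ℤ)).preimage (-g), (shiftFunctor D (1 : ℤ)).map_injective ?_⟩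
  simp [hg]

theorem Trapez.supp_hom_shiftIter_eq_zero {n : ℕ} {A : NSeq D n} (tr : Trapez D A) {Z : D}
    (hA : ∀ m, 1 ≤ m → m ≤ n → ∀ j, 1 ≤ j → j ≤ n - 3 → ∀ f : A.obj m ⟶ shiftIter D j Z, f = 0)
    {k j : ℕ} (hj : 1 ≤ j) (hjk : j + 2 ≤ k) (hk : k ≤ n - 1)
    (δ : tr.supp k ⟶ shiftIter D j Z) : δ = 0 := by
  obtain ⟨d, hd⟩ : ∃ d, k + d = n - 1 := ⟨n - 1 - k, by omega⟩
  induction d generalizing k j with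
  | zero =>
    have e : tr.supp k = A.obj n := by rw [show k = n - 1 by omega]; exact tr.supp_last
    have h : eqToHom e.symm ≫ δ = 0 := hA n (by omega) le_rfl j hj (by omega) _
    simpa using congrArg (eqToHom e ≫ ·) h
  | succ d ih =>
    have h : tr.conn k ≫ δ⟦(1 : ℤ)⟧' = 0 :=
      ih (k := k + 1) (j := j + 1) (by omega) (by omega) (by omega) _ (by omega)
    obtain ⟨ν, rfl⟩ := yoneda_exact₁ (tr.tri k (by omega) (by omega)) δ h
    rw [hA (k + 1) (by omega) (by omega) j hj (by omega) ν]
    exact Limits.comp_zero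

end

theorem trapez_snd_is_left_approximation
    (n : ℕ) (C : Set T)
    (hCT_right : ∀ X : T, X ∈ C ↔
      ∀ Z : T, Z ∈ C → ∀ i : ℕ, 1 ≤ i → i ≤ n - 3 → ∀ f : X ⟶ shiftIter T i Z, f = 0)
    {A : NSeq T n} (hAobj : ∀ i : ℕ, 1 ≤ i → i ≤ n → A.obj i ∈ C)
    (tr : Trapez T A) :
    ∀ i : ℕ, 1 ≤ i → i ≤ n - 3 → ∀ Z : T, Z ∈ C → ∀ γ : tr.supp (i + 1) ⟶ Z,
      ∃ γbar : A.obj (i + 2) ⟶ Z, tr.snd (i + 1) ≫ γbar = γ := by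
  intro i hi hin Z hZ γ
  have hA : ∀ m, 1 ≤ m → m ≤ n → ∀ j, 1 ≤ j → j ≤ n - 3 → ∀ f : A.obj m ⟶ shiftIter T j Z,
      f = 0 := fun m hm hmn j hj hjn ↦
    (hCT_right (A.obj m)).mp (hAobj m hm hmn) Z hZ j hj hjn
  have h : tr.conn (i + 1) ≫ γ⟦(1 : ℤ)⟧' = 0 :=
    tr.supp_hom_shiftIter_eq_zero hA (j := 1) le_rfl (by omega) (by omega) _
  obtain ⟨γbar, hγbar⟩ := yoneda_exact₁ (tr.tri (i + 1) (by omega) (by omega)) γ h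
  exact ⟨γbar, hγbar.symm⟩
end

section
/- Let A_• be an n-angle (an element of 𝒩) with A₁ = A₂ = R and first structure map α₁ = p·1_R. Then R(p)_• is a direct summand of A_• as n-Σ-sequences: there exist morphisms of n-Σ-sequences ι : R(p)_• → A_• and ρ : A_• → R(p)_• with ρ∘ι the identity of R(p)_•, and these may be chosen with ι₁ = ι₂ = ρ₁ = ρ₂ = 1_R. -/
open CategoryTheory CategoryTheory.Limits

universe u

variable (R : Type u) [CommRing R]

/-- An `n`-`Σ`-sequence in the category of finitely generated free `R`-modules, where the
suspension `Σ` is the identity functor: a diagram `A₁ → A₂ → ⋯ → Aₙ → A₁`.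
Only the data indexed by `1 ≤ i ≤ n` is relevant. -/
structure NSeqMod (n : ℕ) where
  obj : ℕ → ModuleCat.{u} R
  free : ∀ i : ℕ, 1 ≤ i → i ≤ n → Module.Free R (obj i)
  fin : ∀ i : ℕ, 1 ≤ i → i ≤ n → Module.Finite R (obj i)
  map : ∀ i : ℕ, obj i ⟶ obj (i + 1)
  last : obj n ⟶ obj 1

variable {R}

/-- `φ` is a morphism of `n`-`Σ`-sequences `A ⟶ B`. -/
def IsSeqHom {n : ℕ} (A B : NSeqMod R n) (φ : ∀ i : ℕ, A.obj i ⟶ B.obj i) : Prop :=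
  (∀ i : ℕ, 1 ≤ i → i ≤ n - 1 → A.map i ≫ φ (i + 1) = φ i ≫ B.map i) ∧
  A.last ≫ φ 1 = φ n ≫ B.last

/-- A candidate `n`-angle: consecutive composites vanish. -/
def IsCandidate {n : ℕ} (A : NSeqMod R n) : Prop :=
  (∀ i : ℕ, 1 ≤ i → i ≤ n - 2 → A.map i ≫ A.map (i + 1) = 0) ∧
  (∀ (m : ℕ) (h : n = m + 1),
    A.map m ≫ eqToHom (congrArg A.obj h.symm) ≫ A.last = 0) ∧
  A.last ≫ A.map 1 = 0

/-- A contractible `n`-`Σ`-sequence. -/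
def Contractible {n : ℕ} (A : NSeqMod R n) : Prop :=
  ∃ (Θ : ∀ i : ℕ, A.obj (i + 1) ⟶ A.obj i) (Θn : A.obj 1 ⟶ A.obj n),
    (∀ i : ℕ, 1 ≤ i → i ≤ n - 2 →
      𝟙 (A.obj (i + 1)) = A.map (i + 1) ≫ Θ (i + 1) + Θ i ≫ A.map i) ∧
    (∀ (m : ℕ) (h : n = m + 1),
      𝟙 (A.obj (m + 1)) =
        eqToHom (congrArg A.obj h.symm) ≫ A.last ≫ Θn ≫ eqToHom (congrArg A.obj h) +
          Θ m ≫ A.map m) ∧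
    𝟙 (A.obj 1) = A.map 1 ≫ Θ 1 + Θn ≫ A.last

/-- The `n`-`Σ`-sequence `F(p)_•` : `F →p→ F →p→ ⋯ →p→ F`. -/
def Fp (F : ModuleCat.{u} R) [Module.Free R F] [Module.Finite R F] (p : R) (n : ℕ) :
    NSeqMod R n where
  obj _ := F
  free _ _ _ := inferInstance
  fin _ _ _ := inferInstance
  map _ := p • 𝟙 F
  last := p • 𝟙 F

/-- The direct sum of two `n`-`Σ`-sequences. -/
def sumSeq {n : ℕ} (A B : NSeqMod R n) : NSeqMod R n where
  obj i := ModuleCat.of R (A.obj i × B.obj i)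
  free i h1 h2 := letI := A.free i h1 h2; letI := B.free i h1 h2
    inferInstanceAs (Module.Free R (A.obj i × B.obj i))
  fin i h1 h2 := letI := A.fin i h1 h2; letI := B.fin i h1 h2
    inferInstanceAs (Module.Finite R (A.obj i × B.obj i))
  map i := ModuleCat.ofHom ((A.map i).hom.prodMap (B.map i).hom)
  last := ModuleCat.ofHom (A.last.hom.prodMap B.last.hom)

/-- Two `n`-`Σ`-sequences are isomorphic if there is a morphism between them all of whose
relevant components are isomorphisms. -/
def SeqIso {n : ℕ} (A B : NSeqMod R n) : Prop :=
  ∃ φ : ∀ i : ℕ, A.obj i ⟶ B.obj i,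
    IsSeqHom A B φ ∧ ∀ i : ℕ, 1 ≤ i → i ≤ n → IsIso (φ i)

/-- Membership in the class `𝒩` of `n`-angles of the exotic `n`-angulated structure on
finitely generated free `R`-modules: `A` is isomorphic to `C_• ⊕ F(p)_•` for some
contractible candidate `n`-angle `C_•` and some finitely generated free module `F`. -/
def MemN (p : R) {n : ℕ} (A : NSeqMod R n) : Prop :=
  ∃ (Cs : NSeqMod R n) (F : ModuleCat.{u} R) (_ : Module.Free R F) (_ : Module.Finite R F),
    IsCandidate Cs ∧ Contractible Cs ∧ SeqIso (sumSeq Cs (Fp F p n)) A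

/-- The `n`-`Σ`-sequence `R(p)_•` : `R →p→ R →p→ ⋯ →p→ R`. -/
def Rp (p : R) (n : ℕ) : NSeqMod R n :=
  letI : Module.Free R (ModuleCat.of R R) := inferInstanceAs (Module.Free R R)
  letI : Module.Finite R (ModuleCat.of R R) := inferInstanceAs (Module.Finite R R)
  Fp (ModuleCat.of R R) p n

/- Write `A_• ≅ C_• ⊕ F(p)_•`. Contractibility gives `α₁ = α₁ θ α₁` on `C_•`,
and conjugating `α₁ = p · 1` shows that `α₁` on `C_•` is divisible by `p`; since `p² = 0` it
vanishes, so `F ≠ 0` (otherwise `α₁ = 0` on `A_•`). A basis vector of `F` splits `R(p)_•` off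
`F(p)_•`, hence off `A_•`. The resulting splitting is multiplication by units `a, b` on `A₁, A₂`;
the first square gives `p a = p b`, which is exactly what lets the scalars `a⁻¹` (at `1`) and
`b⁻¹` (elsewhere) define an automorphism of `R(p)_•` correcting this. -/

section Scalars

theorem ModuleCat.self_hom_eq_smul_id (f : ModuleCat.of R R ⟶ ModuleCat.of R R) :
    f = f.hom 1 • 𝟙 (ModuleCat.of R R) :=
  ModuleCat.hom_ext (LinearMap.ext_ring (by simp))

theorem ModuleCat.smul_id_self_injective :
    Function.Injective fun c : R => c • 𝟙 (ModuleCat.of R R) := by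
  intro c d h
  simpa using congrArg (fun f : ModuleCat.of R R ⟶ ModuleCat.of R R => f.hom 1) h

variable {X : ModuleCat.{u} R} (e : X ≅ ModuleCat.of R R)

theorem CategoryTheory.Iso.exists_eq_smul_inv (f : ModuleCat.of R R ⟶ X) :
    ∃ a : R, f = a • e.inv :=
  ⟨(f ≫ e.hom).hom 1, by
    rw [← Category.id_comp e.inv, ← Linear.smul_comp, Iso.eq_comp_inv]
    exact ModuleCat.self_hom_eq_smul_id _⟩

theorem CategoryTheory.Iso.exists_eq_smul_hom (g : X ⟶ ModuleCat.of R R) :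
    ∃ a : R, g = a • e.hom :=
  ⟨(e.inv ≫ g).hom 1, by
    rw [← Category.comp_id e.hom, ← Linear.comp_smul, ← Iso.inv_comp_eq]
    exact ModuleCat.self_hom_eq_smul_id _⟩

theorem CategoryTheory.Iso.smul_inv_injective : Function.Injective fun c : R => c • e.inv := by
  intro c d h
  apply ModuleCat.smul_id_self_injective
  simpa using congrArg (· ≫ e.hom) h

theorem ModuleCat.exists_retract_self_of_free (F : ModuleCat.{u} R) [Module.Free R F]
    [Nontrivial F] :
    ∃ (J : ModuleCat.of R R ⟶ F) (Q : F ⟶ ModuleCat.of R R), J ≫ Q = 𝟙 _ := by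
  let b := Module.Free.chooseBasis R F
  obtain ⟨i⟩ := b.index_nonempty
  exact ⟨ModuleCat.ofHom (LinearMap.toSpanSingleton R F (b i)), ModuleCat.ofHom (b.coord i),
    by ext; simp⟩

end Scalars

theorem comp_eq_comp_of_inverses {C : Type*} [Category C] {W X Y Z : C} {a : W ⟶ X}
    {b : Y ⟶ Z} {f : W ⟶ Y} {g : X ⟶ Z} {f' : Y ⟶ W} {g' : Z ⟶ X} (h : a ≫ g = f ≫ b)
    (hf : f' ≫ f = 𝟙 Y) (hg : g ≫ g' = 𝟙 X) : b ≫ g' = f' ≫ a :=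
  calc b ≫ g' = f' ≫ f ≫ b ≫ g' := by rw [reassoc_of% hf]
    _ = f' ≫ a := by rw [← reassoc_of% h, hg, Category.comp_id]

section Sequences

variable {n : ℕ}

theorem IsSeqHom.comp {A B C : NSeqMod R n} {φ : ∀ i, A.obj i ⟶ B.obj i}
    {ψ : ∀ i, B.obj i ⟶ C.obj i} (hφ : IsSeqHom A B φ) (hψ : IsSeqHom B C ψ) :
    IsSeqHom A C fun i => φ i ≫ ψ i :=
  ⟨fun i h1 h2 => by rw [reassoc_of% hφ.1 i h1 h2, hψ.1 i h1 h2, Category.assoc],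
    by rw [reassoc_of% hφ.2, hψ.2, Category.assoc]⟩

theorem IsSeqHom.of_inverse {A B : NSeqMod R n} {φ : ∀ i, A.obj i ⟶ B.obj i}
    {ψ : ∀ i, B.obj i ⟶ A.obj i} (hn : 1 ≤ n) (hφ : IsSeqHom A B φ)
    (hψ : ∀ i, 1 ≤ i → i ≤ n → φ i ≫ ψ i = 𝟙 _ ∧ ψ i ≫ φ i = 𝟙 _) : IsSeqHom B A ψ :=
  ⟨fun i h1 h2 => comp_eq_comp_of_inverses (hφ.1 i h1 h2) (hψ i h1 (by omega)).2
      (hψ (i + 1) (by omega) (by omega)).1,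
    comp_eq_comp_of_inverses hφ.2 (hψ n hn le_rfl).2 (hψ 1 le_rfl hn).1⟩

structure SeqRetraction (X A : NSeqMod R n) where
  ι : ∀ i, X.obj i ⟶ A.obj i
  ρ : ∀ i, A.obj i ⟶ X.obj i
  isSeqHom_ι : IsSeqHom X A ι
  isSeqHom_ρ : IsSeqHom A X ρ
  ι_ρ : ∀ i, 1 ≤ i → i ≤ n → ι i ≫ ρ i = 𝟙 (X.obj i)

namespace SeqRetraction

def trans {X Y Z : NSeqMod R n} (r : SeqRetraction X Y) (s : SeqRetraction Y Z) :
    SeqRetraction X Z where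
  ι i := r.ι i ≫ s.ι i
  ρ i := s.ρ i ≫ r.ρ i
  isSeqHom_ι := r.isSeqHom_ι.comp s.isSeqHom_ι
  isSeqHom_ρ := s.isSeqHom_ρ.comp r.isSeqHom_ρ
  ι_ρ i h1 h2 := by simp [reassoc_of% s.ι_ρ i h1 h2, r.ι_ρ i h1 h2]

theorem nonempty_of_seqIso {X A : NSeqMod R n} (hn : 1 ≤ n) (h : SeqIso X A) :
    Nonempty (SeqRetraction X A) := by
  obtain ⟨φ, hφ, hiso⟩ := h
  have : ∀ i, ∃ ψ : A.obj i ⟶ X.obj i,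
      1 ≤ i → i ≤ n → φ i ≫ ψ = 𝟙 _ ∧ ψ ≫ φ i = 𝟙 _ := fun i => by
    by_cases hi : 1 ≤ i ∧ i ≤ n
    · have := hiso i hi.1 hi.2
      exact ⟨inv (φ i), fun _ _ => ⟨IsIso.hom_inv_id _, IsIso.inv_hom_id _⟩⟩
    · exact ⟨0, fun h1 h2 => absurd ⟨h1, h2⟩ hi⟩
  choose ψ hψ using this
  exact ⟨⟨φ, ψ, hφ, hφ.of_inverse hn hψ, fun i h1 h2 => (hψ i h1 h2).1⟩⟩

def inr (C B : NSeqMod R n) : SeqRetraction B (sumSeq C B) where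
  ι _ := ModuleCat.ofHom (LinearMap.inr R _ _)
  ρ _ := ModuleCat.ofHom (LinearMap.snd R _ _)
  isSeqHom_ι := ⟨fun i _ _ => by ext; exact Prod.ext (map_zero (C.map i).hom).symm rfl,
    by ext; exact Prod.ext (map_zero C.last.hom).symm rfl⟩
  isSeqHom_ρ := ⟨fun _ _ _ => by ext; rfl, by ext; rfl⟩
  ι_ρ _ _ _ := by ext; rfl

section Fp

variable (p : R) {F G : ModuleCat.{u} R} [Module.Free R F] [Module.Finite R F]
  [Module.Free R G] [Module.Finite R G]

theorem isSeqHom_Fp_smul (f : F ⟶ G) (c : ℕ → R) (hc : ∀ i j, p * c i = p * c j) :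
    IsSeqHom (Fp F p n) (Fp G p n) fun i => c i • f := by
  refine ⟨fun i _ _ => ?_, ?_⟩ <;>
    simp only [Fp, Linear.smul_comp, Linear.comp_smul, Category.id_comp, Category.comp_id,
      smul_smul, mul_comm _ p]
  exacts [congrArg (· • f) (hc _ _), congrArg (· • f) (hc _ _)]

def ofRetract (J : G ⟶ F) (Q : F ⟶ G) (hJQ : J ≫ Q = 𝟙 G) :
    SeqRetraction (Fp G p n) (Fp F p n) where
  ι _ := J
  ρ _ := Q
  isSeqHom_ι := by simpa using isSeqHom_Fp_smul p J (fun _ => 1) fun _ _ => rfl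
  isSeqHom_ρ := by simpa using isSeqHom_Fp_smul p Q (fun _ => 1) fun _ _ => rfl
  ι_ρ _ _ _ := hJQ

def ofUnits (c d : ℕ → R) (hcd : ∀ i, c i * d i = 1) (hc : ∀ i j, p * c i = p * c j) :
    SeqRetraction (Fp G p n) (Fp G p n) where
  ι i := c i • 𝟙 G
  ρ i := d i • 𝟙 G
  isSeqHom_ι := isSeqHom_Fp_smul p _ c hc
  isSeqHom_ρ := isSeqHom_Fp_smul p _ d fun i j => by
    linear_combination (-(p * d i)) * hcd j + (p * d j) * hcd i - (d i * d j) * hc i j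
  ι_ρ i _ _ := by
    change (c i • 𝟙 G) ≫ (d i • 𝟙 G) = 𝟙 G
    rw [Linear.smul_comp, Category.id_comp, smul_smul, hcd i, one_smul]

end Fp

end SeqRetraction

theorem Contractible.exists_map_one_comp_comp {C : NSeqMod R n} (hcand : IsCandidate C)
    (hcontr : Contractible C) : ∃ θ : C.obj 2 ⟶ C.obj 1, C.map 1 ≫ θ ≫ C.map 1 = C.map 1 := by
  obtain ⟨Θ, Θn, -, -, hΘ⟩ := hcontr
  refine ⟨Θ 1, ?_⟩
  calc C.map 1 ≫ Θ 1 ≫ C.map 1 = (C.map 1 ≫ Θ 1 + Θn ≫ C.last) ≫ C.map 1 := by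
        rw [Preadditive.add_comp, Category.assoc Θn, hcand.2.2, comp_zero, add_zero,
          Category.assoc]
    _ = C.map 1 := by rw [← hΘ, Category.id_comp]

theorem map_one_eq_zero_of_eq_smul {C : NSeqMod R n} (hcand : IsCandidate C)
    (hcontr : Contractible C) {p : R} (hp2 : p * p = 0) {f : C.obj 1 ⟶ C.obj 2}
    (hf : C.map 1 = p • f) : C.map 1 = 0 := by
  obtain ⟨θ, hθ⟩ := hcontr.exists_map_one_comp_comp hcand
  rw [← hθ, hf, Linear.smul_comp, Linear.comp_smul, Linear.comp_smul, smul_smul, hp2,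
    zero_smul]

section Angles

variable {p : R} {A : NSeqMod R n} (e₁ : A.obj 1 ≅ ModuleCat.of R R)
  (e₂ : A.obj 2 ≅ ModuleCat.of R R)

theorem nontrivial_of_seqIso_sumSeq {C : NSeqMod R n} {F : ModuleCat.{u} R} [Module.Free R F]
    [Module.Finite R F] (hcand : IsCandidate C) (hcontr : Contractible C)
    (hiso : SeqIso (sumSeq C (Fp F p n)) A) (hn : 2 ≤ n) (hp : p ≠ 0) (hp2 : p * p = 0)
    (hα : A.map 1 = e₁.hom ≫ (p • e₂.inv)) : Nontrivial F := by
  obtain ⟨φ, hφ, hφiso⟩ := hiso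
  have := hφiso 1 le_rfl (by omega)
  have := hφiso 2 (by omega) hn
  have hsq : (sumSeq C (Fp F p n)).map 1 ≫ φ 2 = φ 1 ≫ A.map 1 := hφ.1 1 le_rfl (by omega)
  have hC : C.map 1 = 0 := by
    let inl : C.obj 1 ⟶ (sumSeq C (Fp F p n)).obj 1 := ModuleCat.ofHom (LinearMap.inl R _ F)
    let fst : (sumSeq C (Fp F p n)).obj 2 ⟶ C.obj 2 := ModuleCat.ofHom (LinearMap.fst R _ F)
    refine map_one_eq_zero_of_eq_smul hcand hcontr hp2
      (f := inl ≫ φ 1 ≫ e₁.hom ≫ e₂.inv ≫ inv (φ 2) ≫ fst) ?_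
    have : C.map 1 = inl ≫ (sumSeq C (Fp F p n)).map 1 ≫ fst := by ext; rfl
    rw [this, (IsIso.eq_comp_inv _).2 hsq, hα]
    simp only [Linear.smul_comp, Linear.comp_smul, Category.assoc]
  by_contra hF
  rw [not_nontrivial_iff_subsingleton] at hF
  have hsum : (sumSeq C (Fp F p n)).map 1 = 0 := by
    ext x
    exact Prod.ext (by simp [sumSeq, hC]; rfl) (Subsingleton.elim (α := F) _ _)
  have hA : A.map 1 = 0 := by
    rw [(IsIso.eq_inv_comp _).2 hsq.symm, hsum, zero_comp, comp_zero]
  apply hp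
  apply ModuleCat.smul_id_self_injective
  simpa [hα] using congrArg (fun g => e₁.inv ≫ g ≫ e₂.hom) hA

theorem MemN.nonempty_seqRetraction (hA : MemN p A) (hn : 2 ≤ n) (hp : p ≠ 0)
    (hp2 : p * p = 0) (hα : A.map 1 = e₁.hom ≫ (p • e₂.inv)) :
    Nonempty (SeqRetraction (Rp p n) A) := by
  obtain ⟨C, F, _, _, hcand, hcontr, hiso⟩ := hA
  have := nontrivial_of_seqIso_sumSeq e₁ e₂ hcand hcontr hiso hn hp hp2 hα
  obtain ⟨J, Q, hJQ⟩ := F.exists_retract_self_of_free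
  obtain ⟨r⟩ := SeqRetraction.nonempty_of_seqIso (by omega) hiso
  exact ⟨(SeqRetraction.ofRetract p J Q hJQ).trans ((SeqRetraction.inr C _).trans r)⟩

theorem SeqRetraction.exists_normalized (r : SeqRetraction (Rp p n) A) (hn : 2 ≤ n)
    (hα : A.map 1 = e₁.hom ≫ (p • e₂.inv)) :
    ∃ s : SeqRetraction (Rp p n) A,
      s.ι 1 = e₁.inv ∧ s.ι 2 = e₂.inv ∧ s.ρ 1 = e₁.hom ∧ s.ρ 2 = e₂.hom := by
  obtain ⟨a, ha⟩ := e₁.exists_eq_smul_inv (r.ι 1)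
  obtain ⟨b, hb⟩ := e₂.exists_eq_smul_inv (r.ι 2)
  obtain ⟨a', ha'⟩ := e₁.exists_eq_smul_hom (r.ρ 1)
  obtain ⟨b', hb'⟩ := e₂.exists_eq_smul_hom (r.ρ 2)
  have haa' : a' * a = 1 := ModuleCat.smul_id_self_injective <| by
    simpa [Rp, Fp, ha, ha', smul_smul] using r.ι_ρ 1 le_rfl (by omega)
  have hbb' : b' * b = 1 := ModuleCat.smul_id_self_injective <| by
    simpa [Rp, Fp, hb, hb', smul_smul] using r.ι_ρ 2 (by omega) hn
  have hab : b * p = p * a := e₂.smul_inv_injective <| by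
    simpa [Rp, Fp, ha, hb, hα, smul_smul] using r.isSeqHom_ι.1 1 le_rfl (by omega)
  let c : ℕ → R := fun i => if i = 1 then a' else b'
  let d : ℕ → R := fun i => if i = 1 then a else b
  have hcd : ∀ i, c i * d i = 1 := fun i => by
    by_cases hi : i = 1 <;> simp [c, d, hi, haa', hbb']
  have hc : ∀ i j, p * c i = p * c j := by
    have key : p * a' = p * b' := by
      linear_combination (-(p * a')) * hbb' + (p * b') * haa' + (a' * b') * hab
    intro i j
    by_cases hi : i = 1 <;> by_cases hj : j = 1 <;> simp [c, hi, hj, key]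
  refine ⟨(SeqRetraction.ofUnits p c d hcd hc).trans r, ?_, ?_, ?_, ?_⟩ <;>
    simp [SeqRetraction.trans, SeqRetraction.ofUnits, Rp, Fp, c, d, ha, hb, ha', hb', smul_smul,
      mul_comm a, mul_comm b, haa', hbb']

end Angles

end Sequences

theorem Rp_summand_of_base_p_general
    {R : Type u} [CommRing R] [IsLocalRing R] (p : R) (hp : p ≠ 0)
    (hmax : IsLocalRing.maximalIdeal R = Ideal.span {p})
    (hsq : IsLocalRing.maximalIdeal R ^ 2 = ⊥)
    (n : ℕ) (hn : 3 ≤ n)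
    (A : NSeqMod R n) (hA : MemN p A)
    (h₁ : A.obj 1 = ModuleCat.of R R) (h₂ : A.obj 2 = ModuleCat.of R R)
    (hα₁ : A.map 1 = eqToHom h₁ ≫ (p • 𝟙 (ModuleCat.of R R)) ≫ eqToHom h₂.symm) :
    ∃ (ι : ∀ i : ℕ, (Rp p n).obj i ⟶ A.obj i) (ρ : ∀ i : ℕ, A.obj i ⟶ (Rp p n).obj i),
      IsSeqHom (Rp p n) A ι ∧ IsSeqHom A (Rp p n) ρ ∧
      (∀ i : ℕ, 1 ≤ i → i ≤ n → ι i ≫ ρ i = 𝟙 ((Rp p n).obj i)) ∧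
      ι 1 = eqToHom h₁.symm ∧ ι 2 = eqToHom h₂.symm ∧
      ρ 1 = eqToHom h₁ ∧ ρ 2 = eqToHom h₂ := by
  have hp2 : p * p = 0 := by
    have hpm : p ∈ IsLocalRing.maximalIdeal R := hmax ▸ Ideal.mem_span_singleton_self p
    simpa [← pow_two, hsq] using Ideal.mul_mem_mul hpm hpm
  have hα : A.map 1 = (eqToIso h₁).hom ≫ (p • (eqToIso h₂).inv) := by simp [hα₁]
  obtain ⟨r⟩ := hA.nonempty_seqRetraction _ _ (by omega) hp hp2 hα
  obtain ⟨s, hs⟩ := r.exists_normalized _ _ (by omega) hα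
  exact ⟨s.ι, s.ρ, s.isSeqHom_ι, s.isSeqHom_ρ, s.ι_ρ, hs⟩

/-- If `A_•` is an `n`-angle with `A₁ = A₂ = R` and first structure map
`α₁ = p · 1_R`, then `R(p)_•` is a direct summand of `A_•` as `n`-`Σ`-sequences, and the
splitting may be chosen to be the identity in the first two components. -/
theorem Rp_summand_of_base_p
    {R : Type u} [CommRing R] [IsLocalRing R] (p : R) (hp : p ≠ 0)
    (hmax : IsLocalRing.maximalIdeal R = Ideal.span {p})
    (hsq : IsLocalRing.maximalIdeal R ^ 2 = ⊥)
    (n : ℕ) (hn : 3 ≤ n) (hpar : Even n ∨ 2 * p = 0)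
    (A : NSeqMod R n) (hA : MemN p A)
    (h₁ : A.obj 1 = ModuleCat.of R R) (h₂ : A.obj 2 = ModuleCat.of R R)
    (hα₁ : A.map 1 = eqToHom h₁ ≫ (p • 𝟙 (ModuleCat.of R R)) ≫ eqToHom h₂.symm) :
    ∃ (ι : ∀ i : ℕ, (Rp p n).obj i ⟶ A.obj i) (ρ : ∀ i : ℕ, A.obj i ⟶ (Rp p n).obj i),
      IsSeqHom (Rp p n) A ι ∧ IsSeqHom A (Rp p n) ρ ∧
      (∀ i : ℕ, 1 ≤ i → i ≤ n → ι i ≫ ρ i = 𝟙 ((Rp p n).obj i)) ∧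
      ι 1 = eqToHom h₁.symm ∧ ι 2 = eqToHom h₂.symm ∧
      ρ 1 = eqToHom h₁ ∧ ρ 2 = eqToHom h₂ :=
  Rp_summand_of_base_p_general p hp hmax hsq n hn A hA h₁ h₂ hα₁
end

section
/- Let A_• be an n-angle (an element of 𝒩) with A₁ = A₂ = R and first structure map α₁ = p·1_R. Then there exist a finitely generated free R-module M and an isomorphism ψ : A₃ → R ⊕ M of R-modules such that ψ∘α₂ equals the map R → R ⊕ M given by x ↦ (p·x, 0); in other words, up to isomorphism of n-angles fixing A₁ and A₂, the second structure map α₂ is (p, 0)ᵀ : R → R ⊕ M. -/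
open CategoryTheory CategoryTheory.Limits

universe u

variable (R : Type u) [CommRing R]

variable {R}

/-!
Write `A ≅ C ⊕ F(p)` with `C` contractible, and let `u = (c, f)` correspond to the generator of
`A₂ = R`. As `α₁ = p`, the map `γ₁` of `C` lands in `p C₂` and `p c ∈ im γ₁`, so `p γ₂ c = 0`;
since `𝔪 = (p)`, in a free module everything killed by `p` is divisible by `p`, so `γ₂ c = p v`
and `α₂ u` corresponds to `p (v, f)`. If `(v, f)` were divisible by `p`, then `γ₂ c = p² v₀ = 0`,
so `c ∈ im γ₁ ⊆ p C₂` by exactness of `C`, and `u` would be divisible by `p`, which it is not.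
Thus `α₂ u = p w` with `w ∉ p A₃`; then some coordinate of `w` is a unit, i.e. a linear form
`g` has `g w = 1`, and `A₃ ≅ R w ⊕ ker g` with `ker g` free because `R` is local.
-/

open IsLocalRing

section Divisibility

variable {R : Type*} [CommRing R] {N : Type*} [AddCommGroup N] [Module R N]

theorem LinearEquiv.exists_apply_eq_smul_iff {N' : Type*} [AddCommGroup N'] [Module R N']
    (e : N ≃ₗ[R] N') (p : R) (x : N) : (∃ y, e x = p • y) ↔ ∃ y, x = p • y :=
  ⟨fun ⟨y, hy⟩ => ⟨e.symm y, by rw [← map_smul, ← hy, e.symm_apply_apply]⟩,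
    fun ⟨y, hy⟩ => ⟨e y, by rw [hy, map_smul]⟩⟩

theorem Module.Basis.exists_eq_smul_of_forall_dvd_repr {ι : Type*} (b : Module.Basis ι R N)
    {p : R} {x : N} (h : ∀ i, p ∣ b.repr x i) : ∃ y, x = p • y := by
  choose c hc using h
  refine ⟨∑ i ∈ (b.repr x).support, c i • b i, ?_⟩
  conv_lhs => rw [← b.linearCombination_repr x]
  simp only [Finsupp.linearCombination_apply, Finsupp.sum, hc, Finset.smul_sum, smul_smul]

variable [IsLocalRing R] {p : R}

theorem mul_self_eq_zero_of_mem_maximalIdeal (hp : p ∈ maximalIdeal R)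
    (hsq : maximalIdeal R ^ 2 = ⊥) : p * p = 0 := by
  have : p * p ∈ maximalIdeal R ^ 2 := pow_two (maximalIdeal R) ▸ Ideal.mul_mem_mul hp hp
  rwa [hsq, Ideal.mem_bot] at this

theorem dvd_of_not_isUnit (hmax : maximalIdeal R = Ideal.span {p}) {a : R} (ha : ¬IsUnit a) :
    p ∣ a :=
  Ideal.mem_span_singleton.mp (hmax ▸ ha)

theorem exists_eq_smul_of_smul_eq_zero [Module.Free R N] (hp : p ≠ 0)
    (hmax : maximalIdeal R = Ideal.span {p}) {x : N} (hx : p • x = 0) : ∃ y, x = p • y := by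
  let b := Module.Free.chooseBasis R N
  refine b.exists_eq_smul_of_forall_dvd_repr fun i => dvd_of_not_isUnit hmax fun hu => hp ?_
  have := congrArg (fun z => b.repr z i) hx
  simp only [map_smul, Finsupp.smul_apply, smul_eq_mul, map_zero, Finsupp.zero_apply] at this
  exact (hu.mul_left_eq_zero).mp this

theorem exists_eq_smul_or_exists_apply_eq_one [Module.Free R N]
    (hmax : maximalIdeal R = Ideal.span {p}) (x : N) :
    (∃ y, x = p • y) ∨ ∃ g : N →ₗ[R] R, g x = 1 := by
  let b := Module.Free.chooseBasis R N
  by_cases h : ∃ i, IsUnit (b.repr x i)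
  · obtain ⟨i, u, hu⟩ := h
    refine .inr ⟨(u⁻¹ : Rˣ) • b.coord i, ?_⟩
    rw [LinearMap.smul_apply, Module.Basis.coord_apply, ← hu, Units.smul_def, smul_eq_mul,
      Units.inv_mul]
  · rw [not_exists] at h
    exact .inl (b.exists_eq_smul_of_forall_dvd_repr fun i => dvd_of_not_isUnit hmax (h i))

end Divisibility

section Splitting

variable {R : Type*} [CommRing R] {N : Type*} [AddCommGroup N] [Module R N]

def LinearMap.equivProdKerOfApplyEqOne (g : N →ₗ[R] R) {w : N} (hw : g w = 1) :
    N ≃ₗ[R] R × LinearMap.ker g where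
  toFun x := (g x, ⟨x - g x • w, by simp [hw]⟩)
  map_add' x y := by ext <;> simp [add_smul]; abel
  map_smul' r x := by ext <;> simp [smul_sub, smul_smul]
  invFun z := z.1 • w + z.2
  left_inv x := by simp
  right_inv := by
    rintro ⟨r, m, hm⟩
    rw [LinearMap.mem_ker] at hm
    ext <;> simp [hw, hm]

theorem LinearMap.equivProdKerOfApplyEqOne_apply_self (g : N →ₗ[R] R) {w : N} (hw : g w = 1) :
    g.equivProdKerOfApplyEqOne hw w = (1, 0) := by
  ext <;> simp [LinearMap.equivProdKerOfApplyEqOne, hw]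

theorem Module.Finite.ker_of_apply_eq_one [Module.Finite R N] (g : N →ₗ[R] R) {w : N}
    (hw : g w = 1) : Module.Finite R (LinearMap.ker g) :=
  Module.Finite.of_surjective ((LinearMap.snd R R (LinearMap.ker g)).comp
      (g.equivProdKerOfApplyEqOne hw).toLinearMap)
    fun m => ⟨(g.equivProdKerOfApplyEqOne hw).symm (0, m), by simp⟩

theorem Module.Free.ker_of_apply_eq_one [IsLocalRing R] [Module.Free R N] [Module.Finite R N]
    (g : N →ₗ[R] R) {w : N} (hw : g w = 1) : Module.Free R (LinearMap.ker g) := by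
  have := Module.Finite.ker_of_apply_eq_one g hw
  have : Module.Projective R (LinearMap.ker g) :=
    .of_split (LinearMap.ker g).subtype
      ((LinearMap.snd R R (LinearMap.ker g)).comp (g.equivProdKerOfApplyEqOne hw).toLinearMap)
      (by ext ⟨m, hm⟩; rw [LinearMap.mem_ker] at hm; simp [LinearMap.equivProdKerOfApplyEqOne, hm])
  exact Module.free_of_flat_of_isLocalRing

end Splitting

section ExactPair

variable {R : Type*} [CommRing R] {p : R} {C₁ C₂ C₃ F : Type*}
  [AddCommGroup C₁] [Module R C₁] [AddCommGroup C₂] [Module R C₂] [AddCommGroup C₃] [Module R C₃]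
  [AddCommGroup F] [Module R F]

theorem exists_map_eq_smul_of_smul_mem_range (hpp : p * p = 0) {γ₁ : C₁ →ₗ[R] C₂}
    {γ₂ : C₂ →ₗ[R] C₃} (hcomp : γ₂ ∘ₗ γ₁ = 0) (hexact : LinearMap.ker γ₂ ≤ LinearMap.range γ₁)
    (hann : ∀ x : C₃, p • x = 0 → ∃ y, x = p • y) (hdiv : ∀ t, ∃ s, γ₁ t = p • s)
    {c : C₂} (hc : ∃ t, γ₁ t = p • c) :
    ∃ v, γ₂ c = p • v ∧ ((∃ v₀, v = p • v₀) → ∃ s, c = p • s) := by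
  obtain ⟨t, ht⟩ := hc
  obtain ⟨v, hv⟩ := hann (γ₂ c) (by rw [← map_smul, ← ht, ← LinearMap.comp_apply, hcomp]; rfl)
  refine ⟨v, hv, ?_⟩
  rintro ⟨v₀, rfl⟩
  obtain ⟨t', rfl⟩ := hexact (show γ₂ c = 0 by rw [hv, smul_smul, hpp, zero_smul])
  exact hdiv t'

theorem exists_prodMap_eq_smul_of_smul_mem_range (hpp : p * p = 0) {γ₁ : C₁ →ₗ[R] C₂}
    {γ₂ : C₂ →ₗ[R] C₃} (hcomp : γ₂ ∘ₗ γ₁ = 0) (hexact : LinearMap.ker γ₂ ≤ LinearMap.range γ₁)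
    (hann : ∀ x : C₃, p • x = 0 → ∃ y, x = p • y)
    (hdiv : ∀ z, ∃ y, γ₁.prodMap (p • LinearMap.id (R := R) (M := F)) z = p • y)
    {u : C₂ × F} (hu : ∃ z, γ₁.prodMap (p • LinearMap.id) z = p • u)
    (hu' : ¬∃ y, u = p • y) :
    ∃ w, γ₂.prodMap (p • LinearMap.id) u = p • w ∧ ¬∃ y, w = p • y := by
  obtain ⟨z, hz⟩ := hu
  obtain ⟨v, hv, hvu⟩ := exists_map_eq_smul_of_smul_mem_range hpp hcomp hexact hann
    (fun t => (hdiv (t, 0)).elim fun y hy => ⟨y.1, congrArg Prod.fst hy⟩) ⟨z.1, congrArg Prod.fst hz⟩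
  refine ⟨(v, u.2), Prod.ext hv rfl, ?_⟩
  rintro ⟨⟨v₀, f₀⟩, hw⟩
  obtain ⟨s, hs⟩ := hvu ⟨v₀, congrArg Prod.fst hw⟩
  exact hu' ⟨(s, f₀), Prod.ext hs (congrArg Prod.snd hw :)⟩

end ExactPair

section Angles

variable {n : ℕ}

theorem Contractible.ker_le_range {A : NSeqMod R n} (hA : Contractible A) {i : ℕ} (h1 : 1 ≤ i)
    (h2 : i ≤ n - 2) : LinearMap.ker (A.map (i + 1)).hom ≤ LinearMap.range (A.map i).hom := by
  obtain ⟨Θ, -, hΘ, -⟩ := hA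
  intro c hc
  rw [LinearMap.mem_ker] at hc
  refine ⟨(Θ i).hom c, ?_⟩
  have := congrArg (fun f => f.hom c) (hΘ i h1 h2)
  simpa [hc] using this.symm

theorem MemN.exists_map_two_eq_smul [IsLocalRing R] {p : R} (hp : p ≠ 0)
    (hmax : maximalIdeal R = Ideal.span {p}) (hsq : maximalIdeal R ^ 2 = ⊥) (hn : 3 ≤ n)
    {A : NSeqMod R n} (hA : MemN p A) (hdiv : ∀ x, ∃ y, (A.map 1).hom x = p • y)
    {u : A.obj 2} (hu : ∃ z, (A.map 1).hom z = p • u) (hu' : ¬∃ y, u = p • y) :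
    ∃ w, (A.map 2).hom u = p • w ∧ ¬∃ y, w = p • y := by
  obtain ⟨Cs, F, _, _, hCand, hContr, φ, ⟨hφ, -⟩, hiso⟩ := hA
  have := Cs.free 3 (by omega) hn
  have hφ_apply (i : ℕ) (h1 : 1 ≤ i) (h2 : i ≤ n - 1) (z) :
      (A.map i).hom (φ i z) = φ (i + 1) ((sumSeq Cs (Fp F p n)).map i z) :=
    congrArg (fun f => f.hom z) (hφ i h1 h2).symm
  let e (i : ℕ) (h1 : 1 ≤ i) (h2 : i ≤ n) : (sumSeq Cs (Fp F p n)).obj i ≃ₗ[R] A.obj i :=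
    (@asIso _ _ _ _ (φ i) (hiso i h1 h2)).toLinearEquiv
  let e₁ := e 1 le_rfl (by omega)
  let e₂ := e 2 (by omega) (by omega)
  let e₃ := e 3 (by omega) hn
  have hdiv' (z : (sumSeq Cs (Fp F p n)).obj 1) : ∃ y, (sumSeq Cs (Fp F p n)).map 1 z = p • y := by
    obtain ⟨y, hy⟩ := hdiv (φ 1 z)
    rw [hφ_apply 1 le_rfl (by omega)] at hy
    exact (e₂.exists_apply_eq_smul_iff p _).mp ⟨y, hy⟩
  have hu₂ : ∃ z, (sumSeq Cs (Fp F p n)).map 1 z = p • e₂.symm u := by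
    obtain ⟨z, hz⟩ := hu
    refine ⟨e₁.symm z, e₂.injective ?_⟩
    rw [map_smul, LinearEquiv.apply_symm_apply, ← hz]
    change φ 2 _ = _
    rw [← hφ_apply 1 le_rfl (by omega)]
    exact congrArg (A.map 1).hom (e₁.apply_symm_apply z)
  have hu₂' : ¬∃ y, e₂.symm u = p • y := by
    rwa [← e₂.exists_apply_eq_smul_iff, LinearEquiv.apply_symm_apply]
  have hpp := mul_self_eq_zero_of_mem_maximalIdeal (hmax ▸ Ideal.mem_span_singleton_self p) hsq
  obtain ⟨w, hw, hw'⟩ := exists_prodMap_eq_smul_of_smul_mem_range hpp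
    (congrArg ModuleCat.Hom.hom (hCand.1 1 le_rfl (by omega)))
    (hContr.ker_le_range le_rfl (by omega))
    (fun _ => exists_eq_smul_of_smul_eq_zero hp hmax) hdiv' hu₂ hu₂'
  refine ⟨e₃ w, ?_, (e₃.exists_apply_eq_smul_iff _ _).not.mpr hw'⟩
  rw [← e₂.apply_symm_apply u]
  change (A.map 2).hom (φ 2 _) = _
  rw [hφ_apply 2 (by omega) (by omega)]
  exact (congrArg e₃ hw).trans (map_smul _ p w)

end Angles

theorem second_map_of_base_p_general
    {R : Type u} [CommRing R] [IsLocalRing R] (p : R) (hp : p ≠ 0)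
    (hmax : IsLocalRing.maximalIdeal R = Ideal.span {p})
    (hsq : IsLocalRing.maximalIdeal R ^ 2 = ⊥)
    (n : ℕ) (hn : 3 ≤ n)
    (A : NSeqMod R n) (hA : MemN p A)
    (h₁ : A.obj 1 = ModuleCat.of R R) (h₂ : A.obj 2 = ModuleCat.of R R)
    (hα₁ : A.map 1 = eqToHom h₁ ≫ (p • 𝟙 (ModuleCat.of R R)) ≫ eqToHom h₂.symm) :
    ∃ (M : ModuleCat.{u} R) (_ : Module.Free R M) (_ : Module.Finite R M)
      (ψ : A.obj 3 ⟶ ModuleCat.of R (R × M)),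
      IsIso ψ ∧
      A.map 2 ≫ ψ =
        eqToHom h₂ ≫ ModuleCat.ofHom (LinearMap.prod (LinearMap.lsmul R R p)
          (0 : R →ₗ[R] M)) := by
  let ε₁ := (eqToIso h₁).toLinearEquiv
  let ε₂ := (eqToIso h₂.symm).toLinearEquiv
  have hα₁_apply (x : A.obj 1) : (A.map 1).hom x = p • ε₂ (ε₁ x) := by
    rw [hα₁]
    exact map_smul ε₂ p _
  have hp_nonunit : ¬IsUnit p := (hmax ▸ Ideal.mem_span_singleton_self p : p ∈ maximalIdeal R)
  have hu : ¬∃ y, ε₂ 1 = p • y := by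
    rw [ε₂.exists_apply_eq_smul_iff]
    exact fun ⟨y, hy⟩ => hp_nonunit (.of_mul_eq_one _ hy.symm)
  obtain ⟨w, hw, hw'⟩ := hA.exists_map_two_eq_smul hp hmax hsq hn
    (fun x => ⟨_, hα₁_apply x⟩) ⟨ε₁.symm 1, by rw [hα₁_apply, ε₁.apply_symm_apply]⟩ hu
  have := A.free 3 (by omega) hn
  have := A.fin 3 (by omega) hn
  obtain ⟨g, hg⟩ := (exists_eq_smul_or_exists_apply_eq_one hmax w).resolve_left hw'
  refine ⟨.of R (LinearMap.ker g), Module.Free.ker_of_apply_eq_one g hg,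
    Module.Finite.ker_of_apply_eq_one g hg,
    (g.equivProdKerOfApplyEqOne hg).toModuleIso.hom, inferInstance, ?_⟩
  rw [← cancel_epi (eqToHom h₂.symm), eqToHom_trans_assoc, eqToHom_refl, Category.id_comp]
  refine ModuleCat.hom_ext (LinearMap.ext_ring ?_)
  change g.equivProdKerOfApplyEqOne hg ((A.map 2).hom (ε₂ 1)) = (p * 1, 0)
  rw [hw, map_smul, LinearMap.equivProdKerOfApplyEqOne_apply_self, Prod.smul_mk, smul_zero,
    smul_eq_mul]

/-- If `A_•` is an `n`-angle with `A₁ = A₂ = R` and first structure map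
`α₁ = p · 1_R`, then there are a finitely generated free module `M` and an isomorphism
`ψ : A₃ ≅ R ⊕ M` under which the second structure map `α₂` becomes
`(p, 0)ᵀ : R → R ⊕ M`, `x ↦ (p·x, 0)`. -/
theorem second_map_of_base_p
    {R : Type u} [CommRing R] [IsLocalRing R] (p : R) (hp : p ≠ 0)
    (hmax : IsLocalRing.maximalIdeal R = Ideal.span {p})
    (hsq : IsLocalRing.maximalIdeal R ^ 2 = ⊥)
    (n : ℕ) (hn : 3 ≤ n) (hpar : Even n ∨ 2 * p = 0)
    (A : NSeqMod R n) (hA : MemN p A)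
    (h₁ : A.obj 1 = ModuleCat.of R R) (h₂ : A.obj 2 = ModuleCat.of R R)
    (hα₁ : A.map 1 = eqToHom h₁ ≫ (p • 𝟙 (ModuleCat.of R R)) ≫ eqToHom h₂.symm) :
    ∃ (M : ModuleCat.{u} R) (_ : Module.Free R M) (_ : Module.Finite R M)
      (ψ : A.obj 3 ⟶ ModuleCat.of R (R × M)),
      IsIso ψ ∧
      A.map 2 ≫ ψ =
        eqToHom h₂ ≫ ModuleCat.ofHom (LinearMap.prod (LinearMap.lsmul R R p)
          (0 : R →ₗ[R] M)) :=
  second_map_of_base_p_general p hp hmax hsq n hn A hA h₁ h₂ hα₁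
end

section
/- In the derived category D(ℤ), for every integer n ≥ 2, the morphism of distinguished triangles from ℤ →n→ ℤ →qₙ→ ℤ/n →εₙ→ ℤ[1] to its rotation ℤ →qₙ→ ℤ/n →εₙ→ ℤ[1] →−n→ ℤ[1] with components φ₁ = 0 : ℤ → ℤ, φ₂ = 0 : ℤ → ℤ/n, φ₃ = εₙ : ℤ/n → ℤ[1] (and fourth component Σφ₁ = 0) is a morphism of distinguished triangles that is not middling good. -/
open CategoryTheory CategoryTheory.Limits CategoryTheory.Pretriangulated

universe v u

/-- A morphism `ψ : T₁ ⟶ T₂` of (distinguished) triangles is *middling good* if it extends to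
a `4 × 4` diagram whose first three rows (`T₁`, `T₂` and a third triangle `T₃`) and first
three columns are distinguished triangles, whose fourth row and column are the shifts of the
first row and column, and in which all squares commute except the bottom-right corner square,
which anticommutes. -/
def MiddlingGood {D : Type u} [Category.{v} D] [Preadditive D] [HasZeroObject D]
    [HasShift D ℤ] [∀ k : ℤ, (shiftFunctor D k).Additive] [Pretriangulated D]
    {T₁ T₂ : Triangle D} (ψ : T₁ ⟶ T₂) : Prop :=
  ∃ (T₃ : Triangle D) (_ : T₃ ∈ distTriang D)
    (a : T₂.obj₁ ⟶ T₃.obj₁) (b : T₂.obj₂ ⟶ T₃.obj₂) (c : T₂.obj₃ ⟶ T₃.obj₃)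
    (a' : T₃.obj₁ ⟶ T₁.obj₁⟦(1 : ℤ)⟧) (b' : T₃.obj₂ ⟶ T₁.obj₂⟦(1 : ℤ)⟧)
    (c' : T₃.obj₃ ⟶ T₁.obj₃⟦(1 : ℤ)⟧),
    -- the three columns are distinguished triangles
    (Triangle.mk ψ.hom₁ a a' ∈ distTriang D) ∧
    (Triangle.mk ψ.hom₂ b b' ∈ distTriang D) ∧
    (Triangle.mk ψ.hom₃ c c' ∈ distTriang D) ∧
    -- the squares between the second and third rows commute
    T₂.mor₁ ≫ b = a ≫ T₃.mor₁ ∧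
    T₂.mor₂ ≫ c = b ≫ T₃.mor₂ ∧
    T₂.mor₃ ≫ (shiftFunctor D (1 : ℤ)).map a = c ≫ T₃.mor₃ ∧
    -- the squares between the third and fourth rows commute, except the corner square,
    -- which anticommutes
    T₃.mor₁ ≫ b' = a' ≫ (shiftFunctor D (1 : ℤ)).map T₁.mor₁ ∧
    T₃.mor₂ ≫ c' = b' ≫ (shiftFunctor D (1 : ℤ)).map T₁.mor₂ ∧
    T₃.mor₃ ≫ (shiftFunctor D (1 : ℤ)).map a' =
      -(c' ≫ (shiftFunctor D (1 : ℤ)).map T₁.mor₃)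

/-!
Suppose `(0, 0, εₙ)` extends to a `4 × 4` diagram with third row `T₃`. The first two columns
start with a zero morphism, so their connecting maps identify `H⁻¹` of `T₃.obj₁` and `T₃.obj₂`
with `H⁰(ℤ) = ℤ`; since the first two columns form a morphism of triangles, these identifications
turn `H⁻¹(T₃.mor₁)` into multiplication by `n`. The third column identifies `T₃.obj₃` with `ℤ[1]`.
The homology sequence of `T₃` in degree `-1` thus yields an exact sequence `ℤ →n→ ℤ →g→ ℤ`, so
`g` induces a monomorphism `ℤ/n → ℤ`, which cannot exist because `ℤ` is torsion-free.
-/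

universe w

theorem ZMod.not_injective_addMonoidHom {B : Type*} [AddCommGroup B] [IsAddTorsionFree B]
    {n : ℕ} (hn : 1 < n) (f : ZMod n →+ B) : ¬ Function.Injective f := by
  have : Fact (1 < n) := ⟨hn⟩
  intro hf
  have hnf : n • f 1 = 0 := by
    rw [← map_nsmul, nsmul_eq_mul, mul_one, ZMod.natCast_self, map_zero]
  have hf1 : f 1 = f 0 := by
    rw [map_zero]
    exact (nsmul_eq_zero_iff_right (by omega)).1 hnf
  exact one_ne_zero (hf hf1)

namespace CategoryTheory

theorem ShortComplex.ShortExact.exists_mono_of_exact {C : Type*} [Category C] [Abelian C]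
    {S : ShortComplex C} (hS : S.ShortExact) {Y : C} {g : S.X₂ ⟶ Y} {w : S.f ≫ g = 0}
    (hg : (ShortComplex.mk S.f g w).Exact) : ∃ m : S.X₃ ⟶ Y, Mono m :=
  ⟨_, hg.mono_g' (hg.rightHomologyDataOfIsColimitCokernelCofork _ hS.gIsCokernel)⟩

lemma Pretriangulated.exists_hom_rotate_of_distTriang {D : Type u} [Category.{v} D]
    [Preadditive D] [HasZeroObject D] [HasShift D ℤ] [∀ k : ℤ, (shiftFunctor D k).Additive]
    [Pretriangulated D] (T : Triangle D) (hT : T ∈ distTriang D) :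
    ∃ ψ : T ⟶ T.rotate, ψ.hom₁ = 0 ∧ ψ.hom₂ = 0 ∧ ψ.hom₃ = T.mor₃ :=
  ⟨Triangle.homMk T T.rotate 0 0 T.mor₃ (comp_zero.trans zero_comp.symm)
    ((comp_distTriang_mor_zero₂₃ _ hT).trans zero_comp.symm)
    (by rw [Functor.map_zero, comp_zero]
        exact (comp_distTriang_mor_zero₂₃ _ (rot_of_distTriang _ hT)).symm), rfl, rfl, rfl⟩

end CategoryTheory

namespace DerivedCategory

variable {C : Type u} [Category.{v} C] [Abelian C] [HasDerivedCategory.{w} C]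

namespace HomologySequence

lemma δ_naturality {T T' : Triangle (DerivedCategory C)} (φ : T ⟶ T') (n₀ n₁ : ℤ)
    (h : n₀ + 1 = n₁ := by lia) :
    (homologyFunctor C n₀).map φ.hom₃ ≫ δ T' n₀ n₁ h =
      δ T n₀ n₁ h ≫ (homologyFunctor C n₁).map φ.hom₁ :=
  (homologyFunctor C 0).homologySequenceδ_naturality T T' φ n₀ n₁ h

lemma isIso_δ_of_isZero {T : Triangle (DerivedCategory C)} (hT : T ∈ distTriang _) {n₀ n₁ : ℤ}
    (h₁ : (homologyFunctor C n₁).map T.mor₁ = 0) (h₂ : IsZero ((homologyFunctor C n₀).obj T.obj₂))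
    (h : n₀ + 1 = n₁ := by lia) : IsIso (δ T n₀ n₁ h) := by
  have := (exact₃ T hT n₀ n₁ h).mono_g (h₂.eq_of_src _ _)
  have := (exact₁ T hT n₀ n₁ h).epi_f h₁
  exact isIso_of_mono_of_epi _

end HomologySequence

open HomologySequence

theorem exists_exact_homology_of_middlingGood {T : Triangle (DerivedCategory C)}
    (hT : T ∈ distTriang _) (hT₂ : IsZero ((homologyFunctor C (-1)).obj T.obj₂))
    (hT₃ : IsZero ((homologyFunctor C (-1)).obj T.obj₃)) {ψ : T ⟶ T.rotate}
    (hψ₁ : ψ.hom₁ = 0) (hψ₂ : ψ.hom₂ = 0) (hψ₃ : ψ.hom₃ = T.mor₃) (hψ : MiddlingGood ψ) :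
    ∃ (g : (homologyFunctor C 0).obj T.obj₂ ⟶ (homologyFunctor C 0).obj T.obj₂)
      (w : (homologyFunctor C 0).map T.mor₁ ≫ g = 0),
      (ShortComplex.mk _ g w).Exact := by
  obtain ⟨T', hT', a, b, c, a', b', c', hcol₁, hcol₂, hcol₃, hab, -, -, hab', -, -⟩ := hψ
  let δ₁ : (homologyFunctor C (-1)).obj T'.obj₁ ⟶ (homologyFunctor C 0).obj T.obj₁ :=
    δ (Triangle.mk ψ.hom₁ a a') (-1) 0
  let δ₂ : (homologyFunctor C (-1)).obj T'.obj₂ ⟶ (homologyFunctor C 0).obj T.obj₂ :=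
    δ (Triangle.mk ψ.hom₂ b b') (-1) 0
  have : IsIso δ₁ := isIso_δ_of_isZero hcol₁
    (((homologyFunctor C 0).congr_map hψ₁).trans (Functor.map_zero _ _ _)) hT₂
  have : IsIso δ₂ := isIso_δ_of_isZero hcol₂
    (((homologyFunctor C 0).congr_map hψ₂).trans (Functor.map_zero _ _ _)) hT₃
  let e₁ : (homologyFunctor C (-1)).obj T'.obj₁ ≅ (homologyFunctor C 0).obj T.obj₁ := asIso δ₁
  let e₂ : (homologyFunctor C (-1)).obj T'.obj₂ ≅ (homologyFunctor C 0).obj T.obj₂ := asIso δ₂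
  -- the third column and `T.rotate.rotate` are distinguished triangles on the same morphism
  let e₃ : T'.obj₃ ≅ T.obj₂⟦(1 : ℤ)⟧ := Triangle.π₃.mapIso
    (isoTriangleOfIso₁₂ (Triangle.mk ψ.hom₃ c c') _ hcol₃
      (rot_of_distTriang _ (rot_of_distTriang _ hT)) (Iso.refl _) (Iso.refl _)
      (by rw [Triangle.mk_mor₁, hψ₃]; exact (Category.comp_id _).trans (Category.id_comp _).symm))
  let e : (homologyFunctor C (-1)).obj T'.obj₃ ≅ (homologyFunctor C 0).obj T.obj₂ :=
    (homologyFunctor C (-1)).mapIso e₃ ≪≫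
      ((homologyFunctor C 0).shiftIso (1 : ℤ) (-1) 0 (by norm_num)).app T.obj₂
  let φ : Triangle.mk ψ.hom₁ a a' ⟶ Triangle.mk ψ.hom₂ b b' :=
    Triangle.homMk _ _ T.mor₁ T.rotate.mor₁ T'.mor₁ ψ.comm₁.symm hab.symm hab'.symm
  have sq : e₁.hom ≫ (homologyFunctor C 0).map T.mor₁ =
      (homologyFunctor C (-1)).map T'.mor₁ ≫ e₂.hom :=
    (δ_naturality φ (-1) 0).symm
  refine ⟨e₂.inv ≫ (homologyFunctor C (-1)).map T'.mor₂ ≫ e.hom, ?_, ?_⟩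
  · rw [← cancel_epi e₁.hom, reassoc_of% sq]
    simp [← Functor.map_comp_assoc, comp_distTriang_mor_zero₁₂ _ hT']
  · refine (ShortComplex.exact_iff_of_iso ?_).1 (exact₂ T' hT' (-1))
    refine ShortComplex.isoMk e₁ e₂ e ?_ ?_
    · exact sq
    · simp

theorem _root_.CategoryTheory.ShortComplex.ShortExact.exists_mono_of_middlingGood
    {S : ShortComplex C} (hS : S.ShortExact) {ψ : hS.singleTriangle ⟶ hS.singleTriangle.rotate}
    (hψ₁ : ψ.hom₁ = 0) (hψ₂ : ψ.hom₂ = 0) (hψ₃ : ψ.hom₃ = hS.singleTriangle.mor₃)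
    (hψ : MiddlingGood ψ) : ∃ m : S.X₃ ⟶ S.X₂, Mono m := by
  obtain ⟨g, w, hg⟩ := exists_exact_homology_of_middlingGood hS.singleTriangle_distinguished
    (isZero_of_isGE ((singleFunctor C 0).obj S.X₂) 0 (-1) (by norm_num))
    (isZero_of_isGE ((singleFunctor C 0).obj S.X₃) 0 (-1) (by norm_num)) hψ₁ hψ₂ hψ₃ hψ
  let ε := singleFunctorCompHomologyFunctorIso C 0
  have hS' : (S.map (singleFunctor C 0 ⋙ homologyFunctor C 0)).ShortExact :=
    ShortComplex.shortExact_of_iso (S.mapNatIso ε).symm hS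
  obtain ⟨m, hm⟩ : ∃ m : (singleFunctor C 0 ⋙ homologyFunctor C 0).obj S.X₃ ⟶
      (singleFunctor C 0 ⋙ homologyFunctor C 0).obj S.X₂, Mono m :=
    hS'.exists_mono_of_exact (w := w) hg
  exact ⟨ε.inv.app S.X₃ ≫ m ≫ ε.hom.app S.X₂, inferInstance⟩

end DerivedCategory

/-- In the derived category `D(ℤ)`, for every `n ≥ 2`, the morphism from the
distinguished triangle `ℤ →n→ ℤ →qₙ→ ℤ/n →εₙ→ ℤ[1]` (induced by the short exact sequence
`0 → ℤ →n→ ℤ →qₙ→ ℤ/n → 0`) to its rotation `ℤ →qₙ→ ℤ/n →εₙ→ ℤ[1] →−n→ ℤ[1]`, with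
components `φ₁ = 0`, `φ₂ = 0` and `φ₃ = εₙ`, is a morphism of distinguished triangles which
is not middling good. -/
theorem rotation_morphism_not_middlingGood [HasDerivedCategory AddCommGrpCat.{0}]
    (n : ℕ) (hn : 2 ≤ n)
    (w : AddCommGrpCat.ofHom (AddMonoidHom.mulLeft (n : ℤ)) ≫
        AddCommGrpCat.ofHom (Int.castAddHom (ZMod n)) = 0)
    (hS : (ShortComplex.mk (AddCommGrpCat.ofHom (AddMonoidHom.mulLeft (n : ℤ)))
        (AddCommGrpCat.ofHom (Int.castAddHom (ZMod n))) w).ShortExact) :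
    (∃ ψ : hS.singleTriangle ⟶ hS.singleTriangle.rotate,
        ψ.hom₁ = 0 ∧ ψ.hom₂ = 0 ∧ ψ.hom₃ = hS.singleTriangle.mor₃) ∧
    ∀ ψ : hS.singleTriangle ⟶ hS.singleTriangle.rotate,
      ψ.hom₁ = 0 → ψ.hom₂ = 0 → ψ.hom₃ = hS.singleTriangle.mor₃ →
        ¬ MiddlingGood ψ := by
  refine ⟨exists_hom_rotate_of_distTriang _ hS.singleTriangle_distinguished, ?_⟩
  intro ψ hψ₁ hψ₂ hψ₃ hψ
  obtain ⟨m, hm⟩ := hS.exists_mono_of_middlingGood hψ₁ hψ₂ hψ₃ hψ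
  exact ZMod.not_injective_addMonoidHom hn m.hom ((AddCommGrpCat.mono_iff_injective m).1 hm)
end
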